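/- Let R be a complete discrete valuation ring whose residue field is algebraically closed of characteristic p, let q = p^h for some integer h ≥ 1, and let σ : R → R be a ring endomorphism such that σ(x) ≡ x^q modulo the maximal ideal of R for every x ∈ R. Then for every unit c ∈ R^× there exists a unit t ∈ R^× such that c·σ(t) = t. -/

import Mathlib

/-! Successive approximation. Modulo the maximal ideal 𝔪, `c σ(t) = t` reads `c̄ a ^ q = a`, which
has a nonzero solution in the algebraically closed residue field. For `Φ x = c σ(x) - x` and a
uniformizer `π` with `σ π = π w`, the correction `x = πⁿ A` changes `Φ` by `πⁿ (c wⁿ σ(A) - A)`,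
so removing an error in `𝔪ⁿ` modulo `𝔪ⁿ⁺¹` amounts to solving `d a ^ q - a = b` in the residue
field. Since `R` is complete, the corrections sum to an exact solution. -/

open Polynomial IsLocalRing

namespace IsAlgClosed

variable {k : Type*} [Field k] [IsAlgClosed k] {q : ℕ}

theorem exists_mul_pow_sub_eq (hq : 2 ≤ q) (d b : k) : ∃ a, d * a ^ q - a = b := by
  rcases eq_or_ne d 0 with rfl | hd
  · exact ⟨-b, by simp⟩
  have hdeg : (C d * X ^ q - X - C b).natDegree = q := by
    compute_degree!
    · rwa [if_neg (by omega), if_neg (by omega), Nat.cast_zero, sub_zero, sub_zero]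
    · omega
  obtain ⟨a, ha⟩ := exists_root (C d * X ^ q - X - C b)
    (natDegree_pos_iff_degree_pos.mp (by omega)).ne'
  exact ⟨a, by simpa [sub_eq_zero] using ha⟩

theorem exists_ne_zero_mul_pow_eq_self (hq : 2 ≤ q) {d : k} (hd : d ≠ 0) :
    ∃ a ≠ 0, d * a ^ q = a := by
  obtain ⟨a, ha⟩ := exists_pow_nat_eq d⁻¹ (n := q - 1) (by omega)
  have ha0 : a ≠ 0 := by
    rintro rfl
    simp [zero_pow (by omega : q - 1 ≠ 0), eq_comm, hd] at ha
  refine ⟨a, ha0, ?_⟩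
  rw [← Nat.sub_add_cancel (by omega : 1 ≤ q), pow_succ, ha, mul_inv_cancel_left₀ hd]

end IsAlgClosed

section

variable {R : Type*} [CommRing R] {I : Ideal R}

theorem IsPrecomplete.exists_forall_sub_mem_pow [IsPrecomplete I R] {s : ℕ → R}
    (hs : ∀ k, s (k + 1) - s k ∈ I ^ k) : ∃ L, ∀ k, L - s k ∈ I ^ k := by
  have hcauchy : AdicCompletion.IsAdicCauchy I R s :=
    (AdicCompletion.isAdicCauchy_iff I R s).2 fun k ↦ by
      rw [SModEq.sub_mem, smul_eq_mul, Ideal.mul_top, ← neg_sub]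
      exact neg_mem (hs k)
  obtain ⟨L, hL⟩ := IsPrecomplete.prec inferInstance hcauchy
  refine ⟨L, fun k ↦ ?_⟩
  have := hL k
  rwa [SModEq.sub_mem, smul_eq_mul, Ideal.mul_top, ← neg_sub, neg_mem_iff] at this

theorem IsHausdorff.eq_of_forall_sub_mem_pow [IsHausdorff I R] {x y : R}
    (h : ∀ k, x - y ∈ I ^ k) : x = y :=
  (IsHausdorff.eq_iff_smodEq (I := I)).2 fun k ↦ by
    rw [SModEq.sub_mem, smul_eq_mul, Ideal.mul_top]
    exact h k

theorem IsAdicComplete.exists_mem_pow_apply_eq [IsAdicComplete I R] (Φ : R →+ R)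
    (hΦ : ∀ n, ∀ x ∈ I ^ n, Φ x ∈ I ^ n)
    (happrox : ∀ n, ∀ y ∈ I ^ n, ∃ x ∈ I ^ n, y - Φ x ∈ I ^ (n + 1))
    {n : ℕ} {y : R} (hy : y ∈ I ^ n) : ∃ x ∈ I ^ n, Φ x = y := by
  choose! g hg using happrox
  let s : ℕ → R := fun k ↦ Nat.rec 0 (fun k sk ↦ sk + g (n + k) (y - Φ sk)) k
  have hs_succ (k : ℕ) : s (k + 1) = s k + g (n + k) (y - Φ (s k)) := rfl
  have herr (k : ℕ) : y - Φ (s k) ∈ I ^ (n + k) := by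
    induction k with
    | zero => simpa [s] using hy
    | succ k ih =>
      rw [hs_succ, map_add, ← sub_sub, ← add_assoc]
      exact (hg _ _ ih).2
  have hinc (k : ℕ) : s (k + 1) - s k ∈ I ^ (n + k) := by
    rw [hs_succ, add_sub_cancel_left]
    exact (hg _ _ (herr k)).1
  have hmem (k : ℕ) : s k ∈ I ^ n := by
    induction k with
    | zero => exact zero_mem _
    | succ k ih => simpa using add_mem ih (Ideal.pow_le_pow_right (by omega) (hinc k))
  obtain ⟨L, hL⟩ := IsPrecomplete.exists_forall_sub_mem_pow (I := I)
    fun k ↦ Ideal.pow_le_pow_right (by omega) (hinc k)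
  refine ⟨L, by simpa using add_mem (hL n) (hmem n), ?_⟩
  refine IsHausdorff.eq_of_forall_sub_mem_pow (I := I) fun k ↦ ?_
  have hsplit : Φ L - y = Φ (L - s k) - (y - Φ (s k)) := by
    rw [map_sub]
    abel
  rw [hsplit]
  exact sub_mem (hΦ k _ (hL k)) (Ideal.pow_le_pow_right (by omega) (herr k))

end

section

variable {R : Type*} [CommRing R]

def RingHom.mulMapSub (c : R) (σ : R →+* R) : R →+ R :=
  (AddMonoidHom.mulLeft c).comp σ.toAddMonoidHom - AddMonoidHom.id R

@[simp]
theorem RingHom.mulMapSub_apply (c : R) (σ : R →+* R) (x : R) : σ.mulMapSub c x = c * σ x - x :=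
  rfl

end

namespace IsLocalRing

variable {R : Type*} [CommRing R] [IsLocalRing R] {q : ℕ} {σ : R →+* R}

theorem residue_map_eq_pow (hσ : ∀ x, σ x - x ^ q ∈ maximalIdeal R) (x : R) :
    residue R (σ x) = residue R x ^ q := by
  rw [← sub_eq_zero, ← map_pow, ← map_sub, residue_eq_zero_iff]
  exact hσ x

theorem map_mem_maximalIdeal_pow (hq : q ≠ 0) (hσ : ∀ x, σ x - x ^ q ∈ maximalIdeal R) {n : ℕ}
    {x : R} (hx : x ∈ maximalIdeal R ^ n) : σ x ∈ maximalIdeal R ^ n := by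
  have hmax : (maximalIdeal R).map σ ≤ maximalIdeal R := Ideal.map_le_iff_le_comap.2 fun y hy ↦ by
    rw [Ideal.mem_comap, ← residue_eq_zero_iff, residue_map_eq_pow hσ,
      (residue_eq_zero_iff y).2 hy, zero_pow hq]
  have := Ideal.mem_map_of_mem σ hx
  rw [Ideal.map_pow] at this
  exact Ideal.pow_right_mono hmax n this

theorem mulMapSub_mem_maximalIdeal_pow (hq : q ≠ 0) (hσ : ∀ x, σ x - x ^ q ∈ maximalIdeal R)
    (c : R) {n : ℕ} {x : R} (hx : x ∈ maximalIdeal R ^ n) :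
    σ.mulMapSub c x ∈ maximalIdeal R ^ n :=
  sub_mem (Ideal.mul_mem_left _ c (map_mem_maximalIdeal_pow hq hσ hx)) hx

theorem exists_isUnit_mulMapSub_mem [IsAlgClosed (ResidueField R)] (hq : 2 ≤ q)
    (hσ : ∀ x, σ x - x ^ q ∈ maximalIdeal R) {c : R} (hc : IsUnit c) :
    ∃ t, IsUnit t ∧ σ.mulMapSub c t ∈ maximalIdeal R := by
  obtain ⟨a, ha0, ha⟩ := IsAlgClosed.exists_ne_zero_mul_pow_eq_self hq
    ((residue_ne_zero_iff_isUnit c).2 hc)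
  obtain ⟨t, rfl⟩ := residue_surjective a
  refine ⟨t, (residue_ne_zero_iff_isUnit t).1 ha0, ?_⟩
  rw [← residue_eq_zero_iff, RingHom.mulMapSub_apply, map_sub, map_mul, residue_map_eq_pow hσ, ha,
    sub_self]

end IsLocalRing

section DVR

variable {R : Type*} [CommRing R] [IsDomain R] [IsDiscreteValuationRing R] {q : ℕ} {σ : R →+* R}

theorem IsDiscreteValuationRing.exists_mem_pow_sub_mulMapSub_mem [IsAlgClosed (ResidueField R)]
    (hq : 2 ≤ q) (hσ : ∀ x, σ x - x ^ q ∈ IsLocalRing.maximalIdeal R) (c : R) (n : ℕ) (y : R)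
    (hy : y ∈ IsLocalRing.maximalIdeal R ^ n) :
    ∃ x ∈ IsLocalRing.maximalIdeal R ^ n,
      y - σ.mulMapSub c x ∈ IsLocalRing.maximalIdeal R ^ (n + 1) := by
  obtain ⟨π, hπ⟩ := IsDiscreteValuationRing.exists_irreducible R
  have mem_pow (m : ℕ) (z : R) : z ∈ IsLocalRing.maximalIdeal R ^ m ↔ π ^ m ∣ z := by
    rw [hπ.maximalIdeal_eq, Ideal.span_singleton_pow, Ideal.mem_span_singleton]
  obtain ⟨u, rfl⟩ := (mem_pow n y).1 hy
  have hπ_mem : π ∈ IsLocalRing.maximalIdeal R :=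
    (IsLocalRing.mem_maximalIdeal π).2 hπ.not_isUnit
  obtain ⟨w, hw⟩ : π ∣ σ π := by
    simpa using (mem_pow 1 _).1 (map_mem_maximalIdeal_pow (by omega) hσ (by rwa [pow_one]))
  obtain ⟨a, ha⟩ := IsAlgClosed.exists_mul_pow_sub_eq hq (residue R (c * w ^ n)) (residue R u)
  obtain ⟨A, rfl⟩ := residue_surjective a
  have hcorr : u - (c * w ^ n * σ A - A) ∈ IsLocalRing.maximalIdeal R := by
    rw [← residue_eq_zero_iff, map_sub, map_sub, map_mul, residue_map_eq_pow hσ, ha, sub_self]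
  obtain ⟨z, hz⟩ := (mem_pow 1 _).1 (by simpa using hcorr)
  refine ⟨π ^ n * A, (mem_pow n _).2 (dvd_mul_right _ _), (mem_pow (n + 1) _).2 ⟨z, ?_⟩⟩
  rw [RingHom.mulMapSub_apply, map_mul, map_pow, hw]
  linear_combination π ^ n * hz

end DVR

theorem stmt_4_general (p : ℕ) (hp : p.Prime) (h : ℕ) (hh : 1 ≤ h) (q : ℕ) (hq : q = p ^ h)
    (R : Type*) [CommRing R] [IsDomain R] [IsDiscreteValuationRing R]
    [IsAdicComplete (IsLocalRing.maximalIdeal R) R]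
    [IsAlgClosed (IsLocalRing.ResidueField R)]
    (σ : R →+* R) (hσ : ∀ x : R, σ x - x ^ q ∈ IsLocalRing.maximalIdeal R)
    (c : Rˣ) :
    ∃ t : Rˣ, (c : R) * σ t = t := by
  have hq2 : 2 ≤ q := hq ▸ Nat.one_lt_pow (by omega) hp.one_lt
  obtain ⟨t₀, ht₀, hΦt₀⟩ := exists_isUnit_mulMapSub_mem hq2 hσ c.isUnit
  obtain ⟨x, hx, hΦx⟩ := IsAdicComplete.exists_mem_pow_apply_eq (σ.mulMapSub (c : R))
    (fun _ _ ↦ mulMapSub_mem_maximalIdeal_pow (by omega) hσ c)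
    (IsDiscreteValuationRing.exists_mem_pow_sub_mulMapSub_mem hq2 hσ c) (n := 1)
    (by rwa [pow_one])
  have ht : IsUnit (t₀ - x) := by
    rwa [← residue_ne_zero_iff_isUnit, map_sub, (residue_eq_zero_iff x).2 (by simpa using hx),
      sub_zero, residue_ne_zero_iff_isUnit]
  refine ⟨ht.unit, ?_⟩
  rw [IsUnit.unit_spec, ← sub_eq_zero, ← RingHom.mulMapSub_apply, map_sub, hΦx, sub_self]

theorem stmt_4 (p : ℕ) (hp : p.Prime) (h : ℕ) (hh : 1 ≤ h) (q : ℕ) (hq : q = p ^ h)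
    (R : Type*) [CommRing R] [IsDomain R] [IsDiscreteValuationRing R]
    [IsAdicComplete (IsLocalRing.maximalIdeal R) R]
    [IsAlgClosed (IsLocalRing.ResidueField R)]
    (hchar : CharP (IsLocalRing.ResidueField R) p)
    (σ : R →+* R) (hσ : ∀ x : R, σ x - x ^ q ∈ IsLocalRing.maximalIdeal R)
    (c : Rˣ) :
    ∃ t : Rˣ, (c : R) * σ t = t :=
  stmt_4_general p hp h hh q hq R σ hσ c
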